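/- In the descending phase of the Blum–Koch algorithm (processing k = |N| down to 1), if every non-terminal N_j with j > k already has all its rules in Greibach Normal Form, then after expanding every rule N_k → N_j.X (j > k) by substituting the rules of N_j, all rules of N_k are in Greibach Normal Form; hence by downward induction the final grammar is in Greibach Normal Form. -/

import Mathlib

namespace WCFG

/-- A context-free grammar: a set of production rules `(A, rhs)` and a start symbol. -/
structure CFG (T N : Type) where
  rules : Set (N × List (T ⊕ N))
  start : N

/-- Parse trees: leaves are terminal letters, internal nodes are labeled by a non-terminal. -/
inductive PT (T N : Type) : Type where
  | leaf (t : T) : PT T N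
  | node (A : N) (children : List (PT T N)) : PT T N

/-- The symbol (terminal or non-terminal) at the root of a parse tree. -/
def PT.sym {T N : Type} : PT T N → T ⊕ N
  | .leaf t => .inl t
  | .node A _ => .inr A

mutual
/-- The yield (produced word) of a parse tree. -/
def PT.yield {T N : Type} : PT T N → List T
  | .leaf t => [t]
  | .node _ cs => PT.yieldF cs
def PT.yieldF {T N : Type} : List (PT T N) → List T
  | [] => []
  | p :: ps => PT.yield p ++ PT.yieldF ps
end

mutual
/-- The weight of a parse tree: product of the weights of the rules used (with multiplicity). -/
def PT.weight {T N : Type} (wt : N × List (T ⊕ N) → ℝ) : PT T N → ℝ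
  | .leaf _ => 1
  | .node A cs => wt (A, cs.map PT.sym) * PT.weightF wt cs
def PT.weightF {T N : Type} (wt : N × List (T ⊕ N) → ℝ) : List (PT T N) → ℝ
  | [] => 1
  | p :: ps => PT.weight wt p * PT.weightF wt ps
end

mutual
/-- Number of occurrences of a rule in a parse tree. -/
def PT.ruleCount {T N : Type} [DecidableEq N] [DecidableEq T]
    (r : N × List (T ⊕ N)) : PT T N → ℕ
  | .leaf _ => 0
  | .node A cs => (if (A, cs.map PT.sym) = r then 1 else 0) + PT.ruleCountF r cs
def PT.ruleCountF {T N : Type} [DecidableEq N] [DecidableEq T]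
    (r : N × List (T ⊕ N)) : List (PT T N) → ℕ
  | [] => 0
  | p :: ps => PT.ruleCount r p + PT.ruleCountF r ps
end

/-- Well-formedness of a parse tree w.r.t. a grammar. -/
inductive PT.wf {T N : Type} (G : CFG T N) : PT T N → Prop
  | leaf (t : T) : (PT.leaf t).wf G
  | node (A : N) (cs : List (PT T N)) (hr : (A, cs.map PT.sym) ∈ G.rules)
      (hc : ∀ c ∈ cs, c.wf G) : (PT.node A cs).wf G

/-- The language generated by a grammar. -/
def CFG.lang {T N : Type} (G : CFG T N) : Set (List T) :=
  {w | ∃ p : PT T N, p.wf G ∧ p.sym = Sum.inr G.start ∧ p.yield = w}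

/-- Unambiguity: any word has at most one parse tree from the axiom. -/
def CFG.Unambiguous {T N : Type} (G : CFG T N) : Prop :=
  ∀ p q : PT T N, p.wf G → q.wf G → p.sym = Sum.inr G.start → q.sym = Sum.inr G.start →
    p.yield = q.yield → p = q

/-- `wDeriv G wt X w c` : the word `w` derives from the sentential form `X`
with total weight `c` (product over all rules used, with multiplicity). -/
def wDeriv {T N : Type} (G : CFG T N) (wt : N × List (T ⊕ N) → ℝ)
    (X : List (T ⊕ N)) (w : List T) (c : ℝ) : Prop :=
  ∃ ps : List (PT T N), (∀ p ∈ ps, p.wf G) ∧ ps.map PT.sym = X ∧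
    PT.yieldF ps = w ∧ (ps.map (PT.weight wt)).prod = c


/-- Descending-phase processing of `N_k`: every rule `N_k → N_j.X` with `k < j` is
expanded by substituting all the rules of `N_j`; the other rules are kept. -/
def ExpandAll {T : Type} (k : ℕ) (G G' : CFG T ℕ) : Prop :=
  G'.start = G.start ∧
  G'.rules = {r ∈ G.rules | r.1 ≠ k ∨ ∀ (B : ℕ) (X : List (T ⊕ ℕ)), r.2 ≠ Sum.inr B :: X} ∪
    {r' | ∃ (j : ℕ) (X Xi : List (T ⊕ ℕ)), k < j ∧ (k, Sum.inr j :: X) ∈ G.rules ∧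
      (j, Xi) ∈ G.rules ∧ r' = (k, Xi ++ X)}

/-!
Expanding a rule `N_k → N_j.X` with `k < j` replaces it by rules `N_k → X_i.X`, where the
`X_i` are right-hand sides of `N_j`; if those already begin with a terminal, so do the new
rules, while a rule of `N_k` that is not expanded cannot begin with a non-terminal. Processing
`k = n-1, …, 0` in turn therefore maintains the invariant `CFG.IsGNFFrom k`, which at `k = 0`
says that the grammar is in Greibach Normal Form.
-/

def BeginsWithTerminal {T N : Type} (rhs : List (T ⊕ N)) : Prop :=
  ∃ (t : T) (X : List (T ⊕ N)), rhs = Sum.inl t :: X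

def BeginsWithLarger {T N : Type} [LT N] (j : N) (rhs : List (T ⊕ N)) : Prop :=
  ∃ (l : N) (X : List (T ⊕ N)), j < l ∧ rhs = Sum.inr l :: X

theorem BeginsWithTerminal.append {T N : Type} {Y : List (T ⊕ N)} (hY : BeginsWithTerminal Y)
    (X : List (T ⊕ N)) : BeginsWithTerminal (Y ++ X) := by
  obtain ⟨t, Z, rfl⟩ := hY
  exact ⟨t, Z ++ X, rfl⟩

/-- The invariant of the descending phase once `N_{n-1}, …, N_m` have been processed. -/
def CFG.IsGNFFrom {T : Type} (G : CFG T ℕ) (m : ℕ) : Prop :=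
  ∀ j rhs, (j, rhs) ∈ G.rules → BeginsWithTerminal rhs ∨ (j < m ∧ BeginsWithLarger j rhs)

namespace ExpandAll

variable {T : Type} {k : ℕ} {G G' : CFG T ℕ}

theorem mem_rules_of_ne (hE : ExpandAll k G G') {j : ℕ} (hj : j ≠ k) {rhs : List (T ⊕ ℕ)}
    (h : (j, rhs) ∈ G'.rules) : (j, rhs) ∈ G.rules := by
  rw [hE.2] at h
  rcases h with ⟨hG, _⟩ | ⟨_, _, _, _, _, _, heq⟩
  · exact hG
  · exact absurd (congrArg Prod.fst heq) hj

theorem beginsWithTerminal (hE : ExpandAll k G G')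
    (habove : ∀ j, k < j → ∀ rhs, (j, rhs) ∈ G.rules → BeginsWithTerminal rhs)
    (hk : ∀ rhs, (k, rhs) ∈ G.rules → BeginsWithTerminal rhs ∨ BeginsWithLarger k rhs)
    {rhs : List (T ⊕ ℕ)} (h : (k, rhs) ∈ G'.rules) : BeginsWithTerminal rhs := by
  rw [hE.2] at h
  rcases h with ⟨hG, hkept⟩ | ⟨j, X, Xi, hkj, _, hXi, heq⟩
  · rcases hkept with hne | hnot
    · exact absurd rfl hne
    · rcases hk rhs hG with hterm | ⟨l, X, _, hX⟩
      · exact hterm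
      · exact absurd hX (hnot l X)
  · rw [show rhs = Xi ++ X from congrArg Prod.snd heq]
    exact (habove j hkj Xi hXi).append X

theorem isGNFFrom (hE : ExpandAll k G G') (hG : G.IsGNFFrom (k + 1)) : G'.IsGNFFrom k := by
  intro j rhs h
  by_cases hjk : j = k
  · subst hjk
    refine Or.inl (hE.beginsWithTerminal (fun l hjl rhs hl => ?_) (fun rhs hr => ?_) h)
    · exact (hG l rhs hl).resolve_right (fun ⟨hlt, _⟩ => by omega)
    · exact (hG j rhs hr).imp_right And.right
  · exact (hG j rhs (hE.mem_rules_of_ne hjk h)).imp_right fun ⟨hlt, hl⟩ => ⟨by omega, hl⟩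

end ExpandAll

theorem isGNFFrom_of_descending {T : Type} {n : ℕ} {Gs : ℕ → CFG T ℕ}
    (h₀ : (Gs 0).IsGNFFrom n) (hstep : ∀ i < n, ExpandAll (n - 1 - i) (Gs i) (Gs (i + 1))) :
    ∀ i ≤ n, (Gs i).IsGNFFrom (n - i)
  | 0, _ => h₀
  | i + 1, hi => by
    have hG : (Gs i).IsGNFFrom (n - 1 - i + 1) := by
      rw [show n - 1 - i + 1 = n - i by omega]
      exact isGNFFrom_of_descending h₀ hstep i (by omega)
    rw [show n - (i + 1) = n - 1 - i by omega]
    exact (hstep i (by omega)).isGNFFrom hG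

/-- In the descending phase of the Blum–Koch algorithm: (a) if every
non-terminal `N_j` with `j > k` already has all its rules in GNF (right-hand sides
starting with a terminal), and every rule of `N_k` starts with a terminal or with some
`N_j`, `j > k`, then after expanding every rule `N_k → N_j.X` all rules of `N_k` are in
GNF; (b) hence, by downward induction, after processing `k = n-1` down to `0` starting
from a grammar whose rules all start with a terminal or with a strictly larger
non-terminal, the final grammar is in GNF. -/
theorem blum_koch_descending_gnf {T : Type} (n : ℕ) (Gs : ℕ → CFG T ℕ)
    (hlhs : ∀ r ∈ (Gs 0).rules, r.1 < n)
    (hasc : ∀ (j : ℕ) (rhs : List (T ⊕ ℕ)), (j, rhs) ∈ (Gs 0).rules →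
      (∃ (t : T) (X : List (T ⊕ ℕ)), rhs = Sum.inl t :: X) ∨
      ∃ (l : ℕ) (X : List (T ⊕ ℕ)), j < l ∧ rhs = Sum.inr l :: X)
    (hstep : ∀ i < n, ExpandAll (n - 1 - i) (Gs i) (Gs (i + 1))) :
    (∀ (k : ℕ) (G G' : CFG T ℕ),
      (∀ j, k < j → ∀ rhs : List (T ⊕ ℕ), (j, rhs) ∈ G.rules →
        ∃ (t : T) (X : List (T ⊕ ℕ)), rhs = Sum.inl t :: X) →
      (∀ rhs : List (T ⊕ ℕ), (k, rhs) ∈ G.rules →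
        (∃ (t : T) (X : List (T ⊕ ℕ)), rhs = Sum.inl t :: X) ∨
        ∃ (j : ℕ) (X : List (T ⊕ ℕ)), k < j ∧ rhs = Sum.inr j :: X) →
      ExpandAll k G G' →
      ∀ rhs : List (T ⊕ ℕ), (k, rhs) ∈ G'.rules →
        ∃ (t : T) (X : List (T ⊕ ℕ)), rhs = Sum.inl t :: X) ∧
    (∀ r ∈ (Gs n).rules, ∃ (t : T) (X : List (T ⊕ ℕ)), r.2 = Sum.inl t :: X) := by
  refine ⟨fun k G G' habove hk hE rhs h => hE.beginsWithTerminal habove hk h, ?_⟩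
  have h₀ : (Gs 0).IsGNFFrom n := fun j rhs h =>
    (hasc j rhs h).imp_right fun hl => ⟨hlhs _ h, hl⟩
  intro r hr
  exact (isGNFFrom_of_descending h₀ hstep n le_rfl r.1 r.2 hr).resolve_right
    fun ⟨hlt, _⟩ => by omega

end WCFG
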